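/- For every F ∈ ℝ^{N×L} there exist p ≥ 1 and matrices W ∈ ℝ^{N×p}, H ∈ ℝ^{L×p} with F = W Hᵀ and (1/2)·( ‖W‖_F² + ‖H‖_F² ) = ‖F‖_*. Consequently, ‖F‖_* = min over all factorizations F = W Hᵀ of (1/2)·( ‖W‖_F² + ‖H‖_F² ). -/

import Mathlib

open Matrix

open scoped ComplexOrder in
/-- The positive semidefinite square root of a positive semidefinite matrix
(the definition `Matrix.PosSemidef.sqrt` of the older Mathlib, since removed). -/
noncomputable def Matrix.PosSemidef.sqrt {n 𝕜 : Type*} [Fintype n] [DecidableEq n] [RCLike 𝕜]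
    {A : Matrix n n 𝕜} (hA : A.PosSemidef) : Matrix n n 𝕜 :=
  hA.1.eigenvectorUnitary.1 * diagonal ((↑) ∘ (√·) ∘ hA.1.eigenvalues) *
    (star hA.1.eigenvectorUnitary : Matrix n n 𝕜)

/-- The nuclear norm of a real `N × L` matrix `F`: the trace of the positive semidefinite
square root of `Fᵀ F` (equivalently, the sum of the singular values of `F`). -/
noncomputable def nuclearNorm {N L : ℕ} (F : Matrix (Fin N) (Fin L) ℝ) : ℝ :=
  (Matrix.PosSemidef.sqrt (Matrix.posSemidef_conjTranspose_mul_self F)).trace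

/-- The squared Frobenius norm of a real matrix: the sum of the squares of its entries. -/
def frobSq {m n : ℕ} (A : Matrix (Fin m) (Fin n) ℝ) : ℝ :=
  ∑ i, ∑ j, (A i j) ^ 2

/-! Diagonalize `Fᵀ F = V diag(σ²) Vᵀ` with `V` orthogonal. Then `F = U diag(σ) Vᵀ`, where
`U = F V diag(σ)⁻¹` is a partial isometry (`U Uᵀ U = U`), and `‖F‖_* = ∑ σⱼ`. The factorization
`W = U diag(√σ)`, `H = V diag(√σ)` attains `½(‖W‖_F² + ‖H‖_F²) = ∑ σⱼ`. Conversely, if `F = W Hᵀ`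
then `∑ σⱼ = tr(Uᵀ F V) = ⟨Wᵀ U, Hᵀ V⟩_F ≤ ½(‖Wᵀ U‖_F² + ‖Hᵀ V‖_F²) ≤ ½(‖W‖_F² + ‖H‖_F²)`, because
multiplying by a partial isometry does not increase the Frobenius norm. -/

namespace Matrix

section SingularValueDecomposition

variable {m n : Type*} [Fintype m] [Fintype n] [DecidableEq n] (F : Matrix m n ℝ)

noncomputable def rightSingularVectors : Matrix n n ℝ :=
  (posSemidef_conjTranspose_mul_self F).1.eigenvectorUnitary

noncomputable def singularValues : n → ℝ :=
  fun j => √((posSemidef_conjTranspose_mul_self F).1.eigenvalues j)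

/-- Columns with `σⱼ = 0` are zero, since `0⁻¹ = 0`. -/
noncomputable def leftSingularVectors : Matrix m n ℝ :=
  F * rightSingularVectors F * diagonal (singularValues F)⁻¹

lemma rightSingularVectors_transpose_mul_self :
    (rightSingularVectors F)ᵀ * rightSingularVectors F = 1 := by
  simpa [rightSingularVectors, star_eq_conjTranspose] using
    Unitary.coe_star_mul_self (posSemidef_conjTranspose_mul_self F).1.eigenvectorUnitary

lemma rightSingularVectors_mul_transpose_self :
    rightSingularVectors F * (rightSingularVectors F)ᵀ = 1 := by
  simpa [rightSingularVectors, star_eq_conjTranspose] using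
    Unitary.coe_mul_star_self (posSemidef_conjTranspose_mul_self F).1.eigenvectorUnitary

lemma transpose_mul_self_mul_rightSingularVectors :
    (F * rightSingularVectors F)ᵀ * (F * rightSingularVectors F) =
      diagonal (singularValues F ^ 2) := by
  have hFF := (posSemidef_conjTranspose_mul_self F).1.conjStarAlgAut_star_eigenvectorUnitary
  rw [Unitary.conjStarAlgAut_star_apply] at hFF
  have hσ : singularValues F ^ 2 = (posSemidef_conjTranspose_mul_self F).1.eigenvalues :=
    funext fun j => Real.sq_sqrt ((posSemidef_conjTranspose_mul_self F).eigenvalues_nonneg j)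
  simp only [star_eq_conjTranspose, conjTranspose_eq_transpose_of_trivial,
    RCLike.ofReal_real_eq_id, Function.id_comp] at hFF
  simpa [hσ, rightSingularVectors, transpose_mul, Matrix.mul_assoc] using hFF

lemma mul_diagonal_inv_mul_self_of_transpose_mul_self {k : Type*} [Fintype k] {A : Matrix k n ℝ}
    {s : n → ℝ} (hA : Aᵀ * A = diagonal (s ^ 2)) : A * diagonal (s⁻¹ * s) = A := by
  ext i j
  rcases eq_or_ne (s j) 0 with hs | hs
  · have hcol : ∑ l, A l j ^ 2 = 0 := by
      simpa [mul_apply, hs, sq] using congrFun (congrFun hA j) j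
    have hAij := (Finset.sum_eq_zero_iff_of_nonneg fun l _ => sq_nonneg (A l j)).1 hcol i
    simp [pow_eq_zero_iff two_ne_zero |>.1 (hAij (Finset.mem_univ i))]
  · simp [hs]

lemma leftSingularVectors_mul_diagonal_mul_transpose :
    leftSingularVectors F * diagonal (singularValues F) * (rightSingularVectors F)ᵀ = F := by
  rw [leftSingularVectors, Matrix.mul_assoc (F * _), diagonal_mul_diagonal, ← Pi.mul_def,
    mul_diagonal_inv_mul_self_of_transpose_mul_self
      (transpose_mul_self_mul_rightSingularVectors F), Matrix.mul_assoc,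
    rightSingularVectors_mul_transpose_self, Matrix.mul_one]

lemma leftSingularVectors_transpose_mul_self :
    (leftSingularVectors F)ᵀ * leftSingularVectors F =
      diagonal ((singularValues F)⁻¹ * singularValues F) := by
  rw [leftSingularVectors, transpose_mul, diagonal_transpose, Matrix.mul_assoc,
    ← Matrix.mul_assoc (F * _)ᵀ, transpose_mul_self_mul_rightSingularVectors,
    diagonal_mul_diagonal, diagonal_mul_diagonal]
  congr 1
  ext j
  rcases eq_or_ne (singularValues F j) 0 with h | h <;> simp [h, sq]

lemma leftSingularVectors_mul_transpose_mul_self :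
    leftSingularVectors F * (leftSingularVectors F)ᵀ * leftSingularVectors F =
      leftSingularVectors F := by
  rw [Matrix.mul_assoc, leftSingularVectors_transpose_mul_self, leftSingularVectors,
    Matrix.mul_assoc, diagonal_mul_diagonal]
  congr 2
  ext j
  rcases eq_or_ne (singularValues F j) 0 with h | h <;> simp [h]

lemma leftSingularVectors_transpose_mul_mul_rightSingularVectors :
    (leftSingularVectors F)ᵀ * F * rightSingularVectors F = diagonal (singularValues F) := by
  rw [leftSingularVectors, transpose_mul, diagonal_transpose, Matrix.mul_assoc, Matrix.mul_assoc,
    transpose_mul_self_mul_rightSingularVectors, diagonal_mul_diagonal]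
  congr 1
  ext j
  rcases eq_or_ne (singularValues F j) 0 with h | h <;> simp [h, sq]

end SingularValueDecomposition

end Matrix

lemma nuclearNorm_eq_sum_singularValues {N L : ℕ} (F : Matrix (Fin N) (Fin L) ℝ) :
    nuclearNorm F = ∑ j, F.singularValues j := by
  rw [nuclearNorm, PosSemidef.sqrt, trace_mul_cycle, Unitary.coe_star_mul_self, Matrix.one_mul,
    trace_diagonal]
  rfl

section FrobeniusNorm

variable {m n : ℕ}

lemma frobSq_eq_trace (A : Matrix (Fin m) (Fin n) ℝ) : frobSq A = trace (Aᵀ * A) := by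
  simp only [frobSq, trace, diag, mul_apply, transpose_apply, sq]
  exact Finset.sum_comm

lemma frobSq_nonneg (A : Matrix (Fin m) (Fin n) ℝ) : 0 ≤ frobSq A := by
  unfold frobSq
  positivity

lemma trace_transpose_mul_le (A B : Matrix (Fin m) (Fin n) ℝ) :
    trace (Aᵀ * B) ≤ 1 / 2 * (frobSq A + frobSq B) := by
  simp only [frobSq, trace, diag, mul_apply, transpose_apply, Finset.mul_sum,
    ← Finset.sum_add_distrib]
  rw [Finset.sum_comm]
  refine Finset.sum_le_sum fun i _ => Finset.sum_le_sum fun j _ => ?_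
  nlinarith [sq_nonneg (A i j - B i j)]

lemma frobSq_mul_diagonal (A : Matrix (Fin m) (Fin n) ℝ) (d : Fin n → ℝ) :
    frobSq (A * diagonal d) = ∑ j, d j ^ 2 * (Aᵀ * A) j j := by
  simp only [frobSq, mul_diagonal]
  simp only [mul_apply, transpose_apply, Finset.mul_sum]
  rw [Finset.sum_comm]
  exact Finset.sum_congr rfl fun j _ => Finset.sum_congr rfl fun i _ => by ring

/-- Frobenius norms do not grow under a partial isometry `U`: the matrix `U Uᵀ` is then an
orthogonal projection `P`, and `‖W‖² = ‖Wᵀ U‖² + ‖(1 - P) W‖²`. -/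
lemma frobSq_transpose_mul_le {k : ℕ} (W : Matrix (Fin m) (Fin k) ℝ)
    {U : Matrix (Fin m) (Fin n) ℝ} (hU : U * Uᵀ * U = U) : frobSq (Wᵀ * U) ≤ frobSq W := by
  set P := U * Uᵀ
  have hP : (1 - P)ᵀ * (1 - P) = 1 - P := by
    simp only [transpose_sub, transpose_one, P, transpose_mul, transpose_transpose, Matrix.sub_mul,
      Matrix.mul_sub, Matrix.one_mul, Matrix.mul_one, ← Matrix.mul_assoc, hU]
    abel
  have hWU : frobSq (Wᵀ * U) = trace (Wᵀ * (P * W)) := by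
    rw [frobSq_eq_trace, transpose_mul, transpose_transpose]
    simp only [P, Matrix.mul_assoc]
    rw [trace_mul_comm Uᵀ]
    simp only [Matrix.mul_assoc]
    rw [trace_mul_comm W]
    simp only [Matrix.mul_assoc]
  have hQW : frobSq ((1 - P) * W) = trace (Wᵀ * W) - trace (Wᵀ * (P * W)) := by
    rw [frobSq_eq_trace, transpose_mul, Matrix.mul_assoc, ← Matrix.mul_assoc (1 - P)ᵀ, hP,
      Matrix.sub_mul, Matrix.one_mul, Matrix.mul_sub, trace_sub]
  linarith [frobSq_nonneg ((1 - P) * W), frobSq_eq_trace W]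

end FrobeniusNorm

section Factorization

variable {N L : ℕ}

lemma exists_factorization_half_frobSq_add_eq_nuclearNorm (F : Matrix (Fin N) (Fin L) ℝ) :
    ∃ (W : Matrix (Fin N) (Fin L) ℝ) (H : Matrix (Fin L) (Fin L) ℝ),
      F = W * Hᵀ ∧ 1 / 2 * (frobSq W + frobSq H) = nuclearNorm F := by
  set σ := F.singularValues
  have hσ : ∀ j, 0 ≤ σ j := fun j => Real.sqrt_nonneg _
  set D := diagonal fun j => √(σ j)
  refine ⟨F.leftSingularVectors * D, F.rightSingularVectors * D, ?_, ?_⟩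
  · have hDD : D * D = diagonal σ := by
      rw [diagonal_mul_diagonal]
      exact congrArg diagonal (funext fun j => Real.mul_self_sqrt (hσ j))
    rw [transpose_mul, diagonal_transpose, Matrix.mul_assoc, ← Matrix.mul_assoc D, hDD,
      ← Matrix.mul_assoc, F.leftSingularVectors_mul_diagonal_mul_transpose]
  · have hW : frobSq (F.leftSingularVectors * D) = ∑ j, σ j := by
      rw [frobSq_mul_diagonal, leftSingularVectors_transpose_mul_self]
      refine Finset.sum_congr rfl fun j _ => ?_
      rw [Real.sq_sqrt (hσ j), diagonal_apply_eq, Pi.mul_apply, Pi.inv_apply, ← mul_assoc,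
        mul_inv_mul_cancel]
    have hH : frobSq (F.rightSingularVectors * D) = ∑ j, σ j := by
      rw [frobSq_mul_diagonal, rightSingularVectors_transpose_mul_self]
      simp [Real.sq_sqrt (hσ _)]
    rw [hW, hH, nuclearNorm_eq_sum_singularValues]
    ring

lemma nuclearNorm_le_half_frobSq_add {p : ℕ} {F : Matrix (Fin N) (Fin L) ℝ}
    {W : Matrix (Fin N) (Fin p) ℝ} {H : Matrix (Fin L) (Fin p) ℝ} (hF : F = W * Hᵀ) :
    nuclearNorm F ≤ 1 / 2 * (frobSq W + frobSq H) := by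
  set U := F.leftSingularVectors
  set V := F.rightSingularVectors
  have hV : V * Vᵀ * V = V := by rw [F.rightSingularVectors_mul_transpose_self, Matrix.one_mul]
  calc nuclearNorm F = trace (Uᵀ * F * V) := by
        rw [nuclearNorm_eq_sum_singularValues, ← trace_diagonal,
          F.leftSingularVectors_transpose_mul_mul_rightSingularVectors]
    _ = trace ((Wᵀ * U)ᵀ * (Hᵀ * V)) := by
        rw [hF]
        simp only [transpose_mul, transpose_transpose, Matrix.mul_assoc]
    _ ≤ 1 / 2 * (frobSq (Wᵀ * U) + frobSq (Hᵀ * V)) := trace_transpose_mul_le _ _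
    _ ≤ 1 / 2 * (frobSq W + frobSq H) := by
        gcongr
        · exact frobSq_transpose_mul_le W F.leftSingularVectors_mul_transpose_mul_self
        · exact frobSq_transpose_mul_le H hV

end Factorization

/-- For every `F ∈ ℝ^{N×L}` there exist `p ≥ 1` and matrices `W ∈ ℝ^{N×p}`,
`H ∈ ℝ^{L×p}` with `F = W Hᵀ` and `(1/2)(‖W‖_F² + ‖H‖_F²) = ‖F‖_*`.  Consequently,
`‖F‖_*` is the minimum of `(1/2)(‖W‖_F² + ‖H‖_F²)` over all factorizations `F = W Hᵀ`. -/
theorem nuclearNorm_eq_min_factorization {N L : ℕ} (F : Matrix (Fin N) (Fin L) ℝ) :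
    (∃ p : ℕ, 1 ≤ p ∧ ∃ (W : Matrix (Fin N) (Fin p) ℝ) (H : Matrix (Fin L) (Fin p) ℝ),
      F = W * Hᵀ ∧ (1 / 2) * (frobSq W + frobSq H) = nuclearNorm F) ∧
    IsLeast {x : ℝ | ∃ (p : ℕ) (W : Matrix (Fin N) (Fin p) ℝ) (H : Matrix (Fin L) (Fin p) ℝ),
      F = W * Hᵀ ∧ x = (1 / 2) * (frobSq W + frobSq H)} (nuclearNorm F) := by
  obtain ⟨W, H, hF, hWH⟩ := exists_factorization_half_frobSq_add_eq_nuclearNorm F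
  refine ⟨?_, ⟨L, W, H, hF, hWH.symm⟩, ?_⟩
  · rcases Nat.eq_zero_or_pos L with rfl | hL
    · refine ⟨1, le_rfl, 0, 0, Subsingleton.elim _ _, ?_⟩
      simp [frobSq, nuclearNorm_eq_sum_singularValues]
    · exact ⟨L, hL, W, H, hF, hWH⟩
  · rintro x ⟨p, W', H', hF', rfl⟩
    exact nuclearNorm_le_half_frobSq_add hF'
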